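/- Let r ≥ 3 and let a₁,…,a_r, b₁,…,b_r ∈ ℝ², and consider the lines ℓ_{a_i,b_i} in ℝ³ for i = 1,…,r. If all the lines ℓ_{a_1,b_1},…,ℓ_{a_r,b_r} pass through a common point of ℝ³ and also lie in a common plane of ℝ³, then the points a₁,…,a_r lie on a common line of ℝ², the points b₁,…,b_r lie on a common line of ℝ², and there exists an isometry T of ℝ² with T(a_i) = b_i for every i = 1,…,r. -/

import Mathlib

/-- Points of the plane `ℝ²` with the Euclidean norm. -/
abbrev Pt := EuclideanSpace ℝ (Fin 2)

/-- Counterclockwise rotation of a vector of `ℝ²` by `π/2`: `(x, y)^⊥ = (-y, x)`. -/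
noncomputable def perp (v : Pt) : Pt := WithLp.toLp 2 ![-(v 1), v 0]

/-- The line `ℓ_{a,b} = { ((a+b)/2 + t·((a−b)/2)^⊥, t) : t ∈ ℝ }` in `ℝ³ = ℝ² × ℝ`. -/
noncomputable def lineOf (a b : Pt) : Set (Pt × ℝ) :=
  {x | ∃ t : ℝ, x = ((2⁻¹ : ℝ) • (a + b) + t • perp ((2⁻¹ : ℝ) • (a - b)), t)}

/-- The direction vector `(((a−b)/2)^⊥, 1)` of the line `ℓ_{a,b}`. -/
noncomputable def dirOf (a b : Pt) : Pt × ℝ := (perp ((2⁻¹ : ℝ) • (a - b)), 1)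

/-- `T : ℝ² → ℝ²` is an isometry of the plane (a distance-preserving bijection of
`ℝ²`, hence affine with norm-preserving linear part). -/
def IsPlaneIsometry (T : Pt → Pt) : Prop :=
  ∃ (A : Pt →ₗ[ℝ] Pt) (w : Pt),
    (∀ x : Pt, ‖A x‖ = ‖x‖) ∧ ∀ x : Pt, T x = A x + w

/-! The direction `(p_i, 1)` of `ℓ_{a_i,b_i}`, where `p_i = ((a_i - b_i)/2)^⊥`, lies in the
direction of the common plane, a 2-dimensional space not contained in `{t = 0}`; hence the `p_i`
are collinear, `p_i = p₀ + c_i d`. If `(x, t)` is the common point, then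
`a_i = x - t p_i - p_i^⊥` and `b_i = x - t p_i + p_i^⊥`, so `a_i` and `b_i` move on lines with
velocities `-(t d + d^⊥)` and `d^⊥ - t d` in the parameter `c_i`. These have the same length
because `d ⊥ d^⊥`, and the reflection exchanging them yields the isometry. -/

open Module

section Collinear

variable {k E : Type*} [Field k] [AddCommGroup E] [Module k E]

theorem collinear_of_forall_prod_mk_one_mem [FiniteDimensional k E] {V : Submodule k (E × k)}
    (hV : finrank k V ≤ 2) {s : Set E} (hs : ∀ p ∈ s, (p, (1 : k)) ∈ V) : Collinear k s := by
  rcases s.eq_empty_or_nonempty with rfl | ⟨p₀, hp₀⟩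
  · exact collinear_empty k E
  set W := (vectorSpan k s).map (LinearMap.inl k E k)
  have hWV : W ≤ V := by
    rw [Submodule.map_le_iff_le_comap, vectorSpan_def, Submodule.span_le]
    rintro _ ⟨p, hp, q, hq, rfl⟩
    simpa using V.sub_mem (hs p hp) (hs q hq)
  have hp₀W : (p₀, (1 : k)) ∉ W := by
    rintro ⟨w, -, hw⟩
    simpa using congrArg Prod.snd hw
  have hWlt : W < V := SetLike.lt_iff_le_and_exists.2 ⟨hWV, _, hs p₀ hp₀, hp₀W⟩
  have hW : finrank k W = finrank k (vectorSpan k s) :=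
    (Submodule.equivMapOfInjective _ LinearMap.inl_injective _).finrank_eq.symm
  rw [collinear_iff_finrank_le_one]
  have := Submodule.finrank_lt_finrank_of_lt hWlt
  omega

end Collinear

theorem exists_line_of_forall_eq_smul_vadd {k V P ι : Type*} [DivisionRing k] [AddCommGroup V]
    [Module k V] [Nontrivial V] [AddTorsor V P] {p : ι → P} {c : ι → k} {v : V} {p₀ : P}
    (h : ∀ i, p i = c i • v +ᵥ p₀) :
    ∃ L : AffineSubspace k P, finrank k L.direction = 1 ∧ ∀ i, p i ∈ L := by
  obtain ⟨w, hw, hvw⟩ : ∃ w : V, w ≠ 0 ∧ v ∈ k ∙ w := by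
    by_cases hv : v = 0
    · obtain ⟨w, hw⟩ := exists_ne (0 : V)
      exact ⟨w, hw, hv ▸ Submodule.zero_mem _⟩
    · exact ⟨v, hv, Submodule.mem_span_singleton_self v⟩
  refine ⟨AffineSubspace.mk' p₀ (k ∙ w), ?_, fun i => ?_⟩
  · rw [AffineSubspace.direction_mk', finrank_span_singleton hw]
  · rw [AffineSubspace.mem_mk', h i, vadd_vsub]
    exact Submodule.smul_mem _ _ hvw

theorem exists_isPlaneIsometry_of_forall_eq_smul_vadd {ι : Type*} {a b : ι → Pt} {c : ι → ℝ}
    {u v a₀ b₀ : Pt} (huv : ‖u‖ = ‖v‖) (ha : ∀ i, a i = c i • u +ᵥ a₀)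
    (hb : ∀ i, b i = c i • v +ᵥ b₀) : ∃ T : Pt → Pt, IsPlaneIsometry T ∧ ∀ i, T (a i) = b i := by
  set R := (ℝ ∙ (u - v))ᗮ.reflection
  refine ⟨fun x => R x + (b₀ - R a₀), ⟨R.toLinearMap, b₀ - R a₀, R.norm_map, fun _ => rfl⟩,
    fun i => ?_⟩
  change R (a i) + (b₀ - R a₀) = b i
  rw [ha i, hb i, vadd_eq_add, vadd_eq_add, map_add, map_smul, Submodule.reflection_sub huv]
  abel

theorem perp_add (v w : Pt) : perp (v + w) = perp v + perp w := by
  ext i; fin_cases i <;> simp [perp, add_comm]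

theorem perp_smul (c : ℝ) (v : Pt) : perp (c • v) = c • perp v := by
  ext i; fin_cases i <;> simp [perp]

theorem perp_perp (v : Pt) : perp (perp v) = -v := by
  ext i; fin_cases i <;> simp [perp]

theorem inner_self_perp (v : Pt) : inner ℝ v (perp v) = 0 := by
  simp [perp, EuclideanSpace.inner_eq_star_dotProduct, Fin.sum_univ_two, dotProduct, mul_comm]

theorem dirOf_mem_direction {a b : Pt} {P : AffineSubspace ℝ (Pt × ℝ)}
    (h : lineOf a b ⊆ P) : dirOf a b ∈ P.direction := by
  have h₀ := h ⟨0, rfl⟩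
  have h₁ := h ⟨1, rfl⟩
  simpa [dirOf] using AffineSubspace.vsub_mem_direction h₁ h₀

theorem eq_of_mk_mem_lineOf {a b x : Pt} {t : ℝ} (h : (x, t) ∈ lineOf a b) :
    a = x - t • (dirOf a b).1 - perp (dirOf a b).1 ∧
      b = x - t • (dirOf a b).1 + perp (dirOf a b).1 := by
  obtain ⟨s, hs⟩ := h
  obtain ⟨rfl, rfl⟩ := Prod.mk.inj hs
  simp only [dirOf, perp_perp]
  constructor <;> module

theorem concurrent_and_coplanar_lines_collinear_general
    (r : ℕ) (a b : Fin r → Pt)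
    (hconc : ∃ x : Pt × ℝ, ∀ i : Fin r, x ∈ lineOf (a i) (b i))
    (hplane : ∃ P : AffineSubspace ℝ (Pt × ℝ), Module.finrank ℝ P.direction = 2 ∧
      ∀ i : Fin r, lineOf (a i) (b i) ⊆ (P : Set (Pt × ℝ))) :
    (∃ La : AffineSubspace ℝ Pt, Module.finrank ℝ La.direction = 1 ∧
      ∀ i : Fin r, a i ∈ La) ∧
    (∃ Lb : AffineSubspace ℝ Pt, Module.finrank ℝ Lb.direction = 1 ∧
      ∀ i : Fin r, b i ∈ Lb) ∧
    ∃ T : Pt → Pt, IsPlaneIsometry T ∧ ∀ i : Fin r, T (a i) = b i := by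
  obtain ⟨⟨x, t⟩, hx⟩ := hconc
  obtain ⟨P, hP, hsub⟩ := hplane
  have hcol : Collinear ℝ (Set.range fun i => (dirOf (a i) (b i)).1) := by
    refine collinear_of_forall_prod_mk_one_mem hP.le ?_
    rintro _ ⟨i, rfl⟩
    exact dirOf_mem_direction (hsub i)
  obtain ⟨p₀, d, hd⟩ := (collinear_iff_exists_forall_eq_smul_vadd _).1 hcol
  choose c hc using fun i => hd _ (Set.mem_range_self i)
  have ha : ∀ i, a i = c i • -(t • d + perp d) +ᵥ (x - t • p₀ - perp p₀) := fun i => by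
    rw [(eq_of_mk_mem_lineOf (hx i)).1, hc i]
    simp only [vadd_eq_add, perp_add, perp_smul]
    module
  have hb : ∀ i, b i = c i • (perp d - t • d) +ᵥ (x - t • p₀ + perp p₀) := fun i => by
    rw [(eq_of_mk_mem_lineOf (hx i)).2, hc i]
    simp only [vadd_eq_add, perp_add, perp_smul]
    module
  have hnorm : ‖-(t • d + perp d)‖ = ‖perp d - t • d‖ := by
    rw [norm_neg, add_comm]
    exact (norm_sub_eq_norm_add (by rw [real_inner_smul_left, inner_self_perp, mul_zero])).symm
  exact ⟨exists_line_of_forall_eq_smul_vadd ha, exists_line_of_forall_eq_smul_vadd hb,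
    exists_isPlaneIsometry_of_forall_eq_smul_vadd hnorm ha hb⟩

/-- **Lemma 2.1(c).** If `r ≥ 3` and the lines `ℓ_{a_i, b_i}`, `i = 1, …, r`, all
pass through a common point of `ℝ³` and also all lie in a common plane of `ℝ³`,
then the points `a_1, …, a_r` lie on a common line of `ℝ²`, the points
`b_1, …, b_r` lie on a common line of `ℝ²`, and there is an isometry `T` of `ℝ²`
with `T(a_i) = b_i` for all `i`. -/
theorem concurrent_and_coplanar_lines_collinear
    (r : ℕ) (hr : 3 ≤ r) (a b : Fin r → Pt)
    (hconc : ∃ x : Pt × ℝ, ∀ i : Fin r, x ∈ lineOf (a i) (b i))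
    (hplane : ∃ P : AffineSubspace ℝ (Pt × ℝ), Module.finrank ℝ P.direction = 2 ∧
      ∀ i : Fin r, lineOf (a i) (b i) ⊆ (P : Set (Pt × ℝ))) :
    (∃ La : AffineSubspace ℝ Pt, Module.finrank ℝ La.direction = 1 ∧
      ∀ i : Fin r, a i ∈ La) ∧
    (∃ Lb : AffineSubspace ℝ Pt, Module.finrank ℝ Lb.direction = 1 ∧
      ∀ i : Fin r, b i ∈ Lb) ∧
    ∃ T : Pt → Pt, IsPlaneIsometry T ∧ ∀ i : Fin r, T (a i) = b i :=
  concurrent_and_coplanar_lines_collinear_general r a b hconc hplane
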